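/- Let p be a prime, Φ : ℚ_p² → ℂ a locally constant compactly supported function with Φ(0,0) = 0, and χ : ℚ_p^× → ℂ^× a continuous character. Then for every s ∈ ℂ and every g ∈ GL₂(ℚ_p) the integral defining f_Φ(g; χ, s) converges absolutely (the integrand is compactly supported in ℚ_p^×), and for all a, d ∈ ℚ_p^×, b ∈ ℚ_p and g ∈ GL₂(ℚ_p) one has the principal-series transformation law f_Φ([[a,b],[0,d]]·g; χ, s) = χ(d)^{−1} · |a/d|_p^{s} · f_Φ(g; χ, s). -/

import Mathlib

/-!
Since `Φ` is locally constant with `Φ(0,0) = 0`, it vanishes near `0`; together with compact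
support this confines `a ↦ Φ(a • v)` (for `v ≠ 0`, e.g. the bottom row of an invertible `g`) to an
annulus `ε ≤ |a| ≤ M`, a compact subset of `ℚ_p^×`, so the continuous integrand is integrable.
The bottom row of `[[a,b],[0,d]] g` is `d` times that of `g`, so the substitution `u ↦ u d` in the
Haar integral pulls out `χ(d)⁻¹ |d|^{-2s}`, which combines with `|det| = |a d| |det g|` into
`χ(d)⁻¹ |a/d|^s`.
-/

open MeasureTheory Topology

noncomputable section

/-- The local Siegel section
`f_Φ(g; χ, s) = |det g|_p^s · ∫_{ℚ_p^×} Φ((0,a)·g) χ(a) |a|_p^{2s} d^×a`,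
where `d^×a` is the Haar measure `μ` on `ℚ_p^×`. -/
def siegelSection (p : ℕ) [Fact p.Prime] [MeasurableSpace ℚ_[p]] [BorelSpace ℚ_[p]]
    (μ : Measure ℚ_[p]ˣ) (Φ : ℚ_[p] × ℚ_[p] → ℂ) (χ : ℚ_[p]ˣ →* ℂˣ) (s : ℂ)
    (g : Matrix (Fin 2) (Fin 2) ℚ_[p]) : ℂ :=
  (‖g.det‖ : ℂ) ^ s *
    ∫ a : ℚ_[p]ˣ, Φ ((a : ℚ_[p]) * g 1 0, (a : ℚ_[p]) * g 1 1) * (χ a : ℂ) *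
      (‖(a : ℚ_[p])‖ : ℂ) ^ (2 * s) ∂μ

instance Units.borelSpace₀ {G₀ : Type*} [GroupWithZero G₀] [TopologicalSpace G₀]
    [ContinuousInv₀ G₀] [MeasurableSpace G₀] [BorelSpace G₀] :
    BorelSpace G₀ˣ where
  measurable_eq := by
    rw [Units.instMeasurableSpace, BorelSpace.measurable_eq (α := G₀), ← borel_comap,
      Units.isEmbedding_val₀.eq_induced]

section UnitsOrbit

variable {𝕜 E β : Type*} [NormedField 𝕜] [NormedAddCommGroup E] [NormedSpace 𝕜 E]

theorem HasCompactSupport.comp_units_smul [ProperSpace 𝕜] [Zero β] {Φ : E → β}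
    (hΦ : HasCompactSupport Φ) (h0 : ∀ᶠ x in 𝓝 0, Φ x = 0) {v : E} (hv : v ≠ 0) :
    HasCompactSupport fun u : 𝕜ˣ => Φ ((u : 𝕜) • v) := by
  obtain ⟨ε, hε, hsmall⟩ := Metric.eventually_nhds_iff_ball.1 h0
  obtain ⟨M, hlarge⟩ := hΦ.isBounded.subset_closedBall 0
  have hv' : 0 < ‖v‖ := norm_pos_iff.2 hv
  set K : Set 𝕜 := Metric.closedBall 0 (M / ‖v‖) \ Metric.ball 0 (ε / ‖v‖)
  have hK : IsCompact K := (isCompact_closedBall _ _).diff Metric.isOpen_ball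
  have hK0 : K ⊆ Set.range (Units.val : 𝕜ˣ → 𝕜) := fun x hx =>
    ⟨Units.mk0 x (by rintro rfl; exact hx.2 (Metric.mem_ball_self (by positivity))), rfl⟩
  refine HasCompactSupport.intro (Units.isEmbedding_val₀.isCompact_preimage' hK hK0) ?_
  intro u hu
  by_contra hne
  refine hu ⟨?_, ?_⟩
  · have := hlarge (subset_tsupport _ hne)
    simp only [Metric.mem_closedBall, dist_zero_right, norm_smul] at this ⊢
    rwa [le_div_iff₀ hv']
  · intro hsm
    refine hne (hsmall _ ?_)
    simp only [Metric.mem_ball, dist_zero_right, norm_smul] at hsm ⊢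
    rwa [lt_div_iff₀ hv'] at hsm

end UnitsOrbit

section NormCpow

variable {𝕜 : Type*} [NormedField 𝕜]

theorem cpow_norm_ne_zero {x : 𝕜} (hx : x ≠ 0) (s : ℂ) : (‖x‖ : ℂ) ^ s ≠ 0 := by
  simp [Complex.cpow_eq_zero_iff, hx]

theorem cpow_norm_mul (x y : 𝕜) (s : ℂ) :
    (‖x * y‖ : ℂ) ^ s = (‖x‖ : ℂ) ^ s * (‖y‖ : ℂ) ^ s := by
  rw [norm_mul, Complex.ofReal_mul,
    Complex.mul_cpow_ofReal_nonneg (norm_nonneg _) (norm_nonneg _)]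

theorem cpow_norm_mul_mul_eq (a : 𝕜) {d : 𝕜} (hd : d ≠ 0) (x : 𝕜) (s : ℂ) :
    (‖a * d * x‖ : ℂ) ^ s = (‖a / d‖ : ℂ) ^ s * (‖d‖ : ℂ) ^ (2 * s) * (‖x‖ : ℂ) ^ s := by
  have hd' : (‖d‖ : ℂ) ≠ 0 := by simpa using hd
  rw [show a * d * x = a / d * (d * d) * x by field_simp, cpow_norm_mul, cpow_norm_mul,
    cpow_norm_mul, two_mul, Complex.cpow_add _ _ hd']

end NormCpow

section SiegelIntegrand

variable {𝕜 E : Type*} [NormedField 𝕜] [NormedAddCommGroup E] [NormedSpace 𝕜 E]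

/-- For `v` the bottom row of `g`, this is the integrand defining `f_Φ(g; χ, s)`. -/
def siegelIntegrand (Φ : E → ℂ) (χ : 𝕜ˣ →* ℂˣ) (s : ℂ) (v : E) (u : 𝕜ˣ) : ℂ :=
  Φ ((u : 𝕜) • v) * χ u * (‖(u : 𝕜)‖ : ℂ) ^ (2 * s)

theorem siegelIntegrand_prodMk (Φ : 𝕜 × 𝕜 → ℂ) (χ : 𝕜ˣ →* ℂˣ) (s : ℂ) (x y : 𝕜) :
    siegelIntegrand Φ χ s (x, y) = fun u : 𝕜ˣ =>
      Φ ((u : 𝕜) * x, (u : 𝕜) * y) * (χ u : ℂ) * (‖(u : 𝕜)‖ : ℂ) ^ (2 * s) :=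
  rfl

theorem siegelIntegrand_mul_right (Φ : E → ℂ) (χ : 𝕜ˣ →* ℂˣ) (s : ℂ) (v : E) (u d : 𝕜ˣ) :
    siegelIntegrand Φ χ s v (u * d) =
      χ d * (‖(d : 𝕜)‖ : ℂ) ^ (2 * s) * siegelIntegrand Φ χ s ((d : 𝕜) • v) u := by
  simp only [siegelIntegrand, Units.val_mul, mul_smul, map_mul, cpow_norm_mul]
  ring

theorem integral_siegelIntegrand_smul [MeasurableSpace 𝕜] [BorelSpace 𝕜] (μ : Measure 𝕜ˣ)
    [μ.IsMulRightInvariant] (Φ : E → ℂ) (χ : 𝕜ˣ →* ℂˣ) (s : ℂ) (v : E) (d : 𝕜ˣ) :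
    ∫ u, siegelIntegrand Φ χ s ((d : 𝕜) • v) u ∂μ =
      (χ d : ℂ)⁻¹ * ((‖(d : 𝕜)‖ : ℂ) ^ (2 * s))⁻¹ * ∫ u, siegelIntegrand Φ χ s v u ∂μ := by
  rw [← integral_mul_right_eq_self (siegelIntegrand Φ χ s v) d, ← integral_const_mul]
  congr 1 with u
  rw [siegelIntegrand_mul_right]
  have := cpow_norm_ne_zero d.ne_zero (2 * s)
  field_simp

theorem continuous_siegelIntegrand {Φ : E → ℂ} (hΦ : Continuous Φ) {χ : 𝕜ˣ →* ℂˣ}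
    (hχ : Continuous fun u : 𝕜ˣ => (χ u : ℂ)) (s : ℂ) (v : E) :
    Continuous (siegelIntegrand Φ χ s v) := by
  have hnorm : Continuous fun u : 𝕜ˣ => ((‖(u : 𝕜)‖ : ℝ) : ℂ) :=
    Complex.continuous_ofReal.comp (continuous_norm.comp Units.continuous_val)
  refine ((hΦ.comp (Units.continuous_val.smul continuous_const)).mul hχ).mul
    (hnorm.cpow continuous_const fun u => ?_)
  exact Complex.ofReal_mem_slitPlane.2 (norm_pos_iff.2 u.ne_zero)

theorem integrable_siegelIntegrand [ProperSpace 𝕜] [MeasurableSpace 𝕜] [BorelSpace 𝕜]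
    (μ : Measure 𝕜ˣ) [IsFiniteMeasureOnCompacts μ] {Φ : E → ℂ} (hΦ : Continuous Φ)
    (hΦcs : HasCompactSupport Φ) (hΦ0 : ∀ᶠ x in 𝓝 0, Φ x = 0) {χ : 𝕜ˣ →* ℂˣ}
    (hχ : Continuous fun u : 𝕜ˣ => (χ u : ℂ)) (s : ℂ) {v : E} (hv : v ≠ 0) :
    Integrable (siegelIntegrand Φ χ s v) μ :=
  (continuous_siegelIntegrand hΦ hχ s v).integrable_of_hasCompactSupport
    ((hΦcs.comp_units_smul hΦ0 hv).mul_right.mul_right)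

end SiegelIntegrand

section Matrix

variable {R : Type*} [CommRing R]

theorem Matrix.upperTriangular_mul_apply_one (a b d : R) (g : Matrix (Fin 2) (Fin 2) R)
    (j : Fin 2) : (!![a, b; 0, d] * g) 1 j = d * g 1 j := by
  simp [Matrix.mul_apply, Fin.sum_univ_two]

theorem Matrix.det_upperTriangular_mul (a b d : R) (g : Matrix (Fin 2) (Fin 2) R) :
    (!![a, b; 0, d] * g).det = a * d * g.det := by
  rw [Matrix.det_mul, Matrix.det_fin_two_of]
  ring

theorem Matrix.row_one_ne_zero_of_isUnit [Nontrivial R] {g : Matrix (Fin 2) (Fin 2) R}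
    (hg : IsUnit g) : (g 1 0, g 1 1) ≠ 0 := by
  intro h
  obtain ⟨h0, h1⟩ := Prod.mk_eq_zero.1 h
  have hdet := (Matrix.isUnit_iff_isUnit_det g).1 hg
  rw [Matrix.det_fin_two, h0, h1] at hdet
  simp at hdet

end Matrix

section Padic

variable {p : ℕ} [Fact p.Prime] [MeasurableSpace ℚ_[p]] [BorelSpace ℚ_[p]]

theorem siegelSection_eq (μ : Measure ℚ_[p]ˣ) (Φ : ℚ_[p] × ℚ_[p] → ℂ) (χ : ℚ_[p]ˣ →* ℂˣ)
    (s : ℂ) (g : Matrix (Fin 2) (Fin 2) ℚ_[p]) :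
    siegelSection p μ Φ χ s g =
      (‖g.det‖ : ℂ) ^ s * ∫ u, siegelIntegrand Φ χ s (g 1 0, g 1 1) u ∂μ :=
  rfl

theorem siegelSection_upperTriangular_mul (μ : Measure ℚ_[p]ˣ) [μ.IsMulRightInvariant]
    (Φ : ℚ_[p] × ℚ_[p] → ℂ) (χ : ℚ_[p]ˣ →* ℂˣ) (s : ℂ) (a d : ℚ_[p]ˣ) (b : ℚ_[p])
    (g : Matrix (Fin 2) (Fin 2) ℚ_[p]) :
    siegelSection p μ Φ χ s (!![(a : ℚ_[p]), b; 0, (d : ℚ_[p])] * g) =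
      (((χ d)⁻¹ : ℂˣ) : ℂ) * (‖(a : ℚ_[p]) / (d : ℚ_[p])‖ : ℂ) ^ s *
        siegelSection p μ Φ χ s g := by
  have hrow : ((!![(a : ℚ_[p]), b; 0, (d : ℚ_[p])] * g) 1 0,
      (!![(a : ℚ_[p]), b; 0, (d : ℚ_[p])] * g) 1 1) = (d : ℚ_[p]) • (g 1 0, g 1 1) := by
    simp only [Matrix.upperTriangular_mul_apply_one, Prod.smul_mk, smul_eq_mul]
  have hd := cpow_norm_ne_zero d.ne_zero (2 * s)
  rw [siegelSection_eq, siegelSection_eq, Matrix.det_upperTriangular_mul, hrow,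
    integral_siegelIntegrand_smul, cpow_norm_mul_mul_eq _ d.ne_zero, Units.val_inv_eq_inv_val]
  field_simp

end Padic

theorem stmt_8_general (p : ℕ) [Fact p.Prime] [MeasurableSpace ℚ_[p]] [BorelSpace ℚ_[p]]
    (Φ : ℚ_[p] × ℚ_[p] → ℂ) (hΦlc : IsLocallyConstant Φ) (hΦcs : HasCompactSupport Φ)
    (hΦ0 : Φ (0, 0) = 0)
    (χ : ℚ_[p]ˣ →* ℂˣ) (hχ : Continuous fun u : ℚ_[p]ˣ => (χ u : ℂ))
    (μ : Measure ℚ_[p]ˣ) [μ.IsHaarMeasure] :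
    (∀ (s : ℂ) (g : Matrix (Fin 2) (Fin 2) ℚ_[p]), IsUnit g →
      Integrable (fun a : ℚ_[p]ˣ =>
        Φ ((a : ℚ_[p]) * g 1 0, (a : ℚ_[p]) * g 1 1) * (χ a : ℂ) *
          (‖(a : ℚ_[p])‖ : ℂ) ^ (2 * s)) μ) ∧
    (∀ (s : ℂ) (a d : ℚ_[p]ˣ) (b : ℚ_[p]) (g : Matrix (Fin 2) (Fin 2) ℚ_[p]), IsUnit g →
      siegelSection p μ Φ χ s (!![(a : ℚ_[p]), b; 0, (d : ℚ_[p])] * g) =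
        (((χ d)⁻¹ : ℂˣ) : ℂ) * (‖(a : ℚ_[p]) / (d : ℚ_[p])‖ : ℂ) ^ s *
          siegelSection p μ Φ χ s g) := by
  have hΦ_near_zero : ∀ᶠ x in 𝓝 0, Φ x = 0 := (hΦlc.isOpen_fiber 0).mem_nhds hΦ0
  refine ⟨fun s g hg => ?_, fun s a d b g _ => siegelSection_upperTriangular_mul μ Φ χ s a d b g⟩
  rw [← siegelIntegrand_prodMk]
  exact integrable_siegelIntegrand μ hΦlc.continuous hΦcs hΦ_near_zero hχ s
    (Matrix.row_one_ne_zero_of_isUnit hg)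

/-- **Convergence and the principal-series transformation law for Siegel sections.**
Let `p` be a prime, `Φ : ℚ_p² → ℂ` locally constant and compactly supported with `Φ(0,0) = 0`,
and `χ : ℚ_p^× → ℂ^×` a continuous character.  Then for every `s ∈ ℂ` and every
`g ∈ GL₂(ℚ_p)` the integral defining `f_Φ(g; χ, s)` converges absolutely, and for all
`a, d ∈ ℚ_p^×`, `b ∈ ℚ_p` and `g ∈ GL₂(ℚ_p)` one has
`f_Φ([[a,b],[0,d]]·g; χ, s) = χ(d)^{−1} · |a/d|_p^{s} · f_Φ(g; χ, s)`. -/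
theorem stmt_8 (p : ℕ) [Fact p.Prime] [MeasurableSpace ℚ_[p]] [BorelSpace ℚ_[p]]
    (Φ : ℚ_[p] × ℚ_[p] → ℂ) (hΦlc : IsLocallyConstant Φ) (hΦcs : HasCompactSupport Φ)
    (hΦ0 : Φ (0, 0) = 0)
    (χ : ℚ_[p]ˣ →* ℂˣ) (hχ : Continuous fun u : ℚ_[p]ˣ => (χ u : ℂ))
    (μ : Measure ℚ_[p]ˣ) [μ.IsHaarMeasure]
    (hμ : μ {u : ℚ_[p]ˣ | ‖(u : ℚ_[p])‖ = 1} = 1) :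
    (∀ (s : ℂ) (g : Matrix (Fin 2) (Fin 2) ℚ_[p]), IsUnit g →
      Integrable (fun a : ℚ_[p]ˣ =>
        Φ ((a : ℚ_[p]) * g 1 0, (a : ℚ_[p]) * g 1 1) * (χ a : ℂ) *
          (‖(a : ℚ_[p])‖ : ℂ) ^ (2 * s)) μ) ∧
    (∀ (s : ℂ) (a d : ℚ_[p]ˣ) (b : ℚ_[p]) (g : Matrix (Fin 2) (Fin 2) ℚ_[p]), IsUnit g →
      siegelSection p μ Φ χ s (!![(a : ℚ_[p]), b; 0, (d : ℚ_[p])] * g) =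
        (((χ d)⁻¹ : ℂˣ) : ℂ) * (‖(a : ℚ_[p]) / (d : ℚ_[p])‖ : ℂ) ^ s *
          siegelSection p μ Φ χ s g) :=
  stmt_8_general p Φ hΦlc hΦcs hΦ0 χ hχ μ
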